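/- There exists an SPA-ST instance I and a stable matching M in I such that |M| = (2/3)·|M_opt|, where M_opt is a maximum-cardinality stable matching in I. Concretely: students s_1 with list a tie (p_3 p_2), s_2 with list p_3, s_3 with list p_3, p_2, p_1; project p_1 offered by l_1 with capacity 2, p_2 offered by l_1 with capacity 1, p_3 offered by l_2 with capacity 1; l_1's list is s_1, s_3 with capacity 2; l_2's list is s_1, s_2, s_3 with capacity 1. Then M = {(s_1,p_3),(s_3,p_2)} is stable of size 2, and M' = {(s_1,p_2),(s_2,p_3),(s_3,p_1)} is stable of size 3. -/

import Mathlib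

open scoped Classical
open Finset

/-- An instance of the Student-Project Allocation problem with lecturer
preferences over students, with ties (SPA-ST).  Preferences are encoded by
rank functions: a lower rank means more preferred; equal ranks encode ties. -/
structure SPAST (S P L : Type) where
  /-- the lecturer offering each project -/
  lec : P → L
  /-- project capacities -/
  cap : P → ℕ
  /-- lecturer capacities -/
  dcap : L → ℕ
  /-- `acc s p` iff student `s` finds project `p` acceptable -/
  acc : S → P → Prop
  /-- student rank function (lower is better); meaningful on acceptable projects -/
  sRank : S → P → ℕ
  /-- lecturer rank function over students (lower is better) -/
  lRank : L → S → ℕ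

variable {S P L : Type}

/-- students assigned to a project in `M` -/
noncomputable def projAssignees [Fintype S] (M : S → Option P) (p : P) : Finset S :=
  Finset.univ.filter (fun s => M s = some p)

/-- students assigned to some project of lecturer `k` in `M` -/
noncomputable def lecAssignees [Fintype S] (I : SPAST S P L) (M : S → Option P) (k : L) :
    Finset S :=
  Finset.univ.filter (fun s => ∃ p, M s = some p ∧ I.lec p = k)

def IsMatching [Fintype S] (I : SPAST S P L) (M : S → Option P) : Prop :=
  (∀ s p, M s = some p → I.acc s p) ∧
  (∀ p, (projAssignees M p).card ≤ I.cap p) ∧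
  (∀ k, (lecAssignees I M k).card ≤ I.dcap k)

def ProjFull [Fintype S] (I : SPAST S P L) (M : S → Option P) (p : P) : Prop :=
  (projAssignees M p).card = I.cap p

def LecFull [Fintype S] (I : SPAST S P L) (M : S → Option P) (k : L) : Prop :=
  (lecAssignees I M k).card = I.dcap k

/-- `s` finds `p` acceptable and is unassigned or strictly prefers `p` to `M(s)`. -/
def WantsToMove (I : SPAST S P L) (M : S → Option P) (s : S) (p : P) : Prop :=
  I.acc s p ∧ (M s = none ∨ ∃ p', M s = some p' ∧ I.sRank s p < I.sRank s p')

/-- `(s, p)` is a blocking pair of `M`. -/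
def Blocks [Fintype S] (I : SPAST S P L) (M : S → Option P) (s : S) (p : P) : Prop :=
  WantsToMove I M s p ∧
  ( (¬ ProjFull I M p ∧ ¬ LecFull I M (I.lec p)) ∨
    (¬ ProjFull I M p ∧ LecFull I M (I.lec p) ∧
      (s ∈ lecAssignees I M (I.lec p) ∨
       ∃ s' ∈ lecAssignees I M (I.lec p), I.lRank (I.lec p) s < I.lRank (I.lec p) s')) ∨
    (ProjFull I M p ∧
       ∃ s' ∈ projAssignees M p, I.lRank (I.lec p) s < I.lRank (I.lec p) s') )

def Stable [Fintype S] (I : SPAST S P L) (M : S → Option P) : Prop :=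
  IsMatching I M ∧ ∀ s p, ¬ Blocks I M s p

/-- the number of assigned agents in a matching -/
noncomputable def msize {A B : Type} [Fintype A] (M : A → Option B) : ℕ :=
  (Finset.univ.filter (fun a => (M a).isSome)).card

/-- The concrete instance: students `s₁ s₂ s₃` (indices `0,1,2`), projects
`p₁ p₂ p₃` (indices `0,1,2`), lecturers `l₁ l₂` (indices `0,1`).
`s₁`: tie `(p₃ p₂)`; `s₂`: `p₃`; `s₃`: `p₃ p₂ p₁`.
`p₁,p₂` offered by `l₁` with capacities `2,1`; `p₃` by `l₂` with capacity `1`.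
`l₁`: `s₁ s₃`, capacity `2`; `l₂`: `s₁ s₂ s₃`, capacity `1`. -/
def I5 : SPAST (Fin 3) (Fin 3) (Fin 2) where
  lec := ![0, 0, 1]
  cap := ![2, 1, 1]
  dcap := ![2, 1]
  acc := fun s p => if s = 0 then (p = 2 ∨ p = 1) else if s = 1 then p = 2 else True
  sRank := fun s p =>
    if s = 0 then 0
    else if s = 1 then 0
    else if p = 2 then 0 else if p = 1 then 1 else 2
  lRank := fun k s =>
    if k = 0 then (if s = 0 then 0 else 1)
    else (if s = 0 then 0 else if s = 1 then 1 else 2)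

/-- the stable matching `{(s₁, p₃), (s₃, p₂)}` of size 2 -/
def M5 : Fin 3 → Option (Fin 3) := fun s =>
  if s = 0 then some 2 else if s = 1 then none else some 1

/-- the maximum stable matching `{(s₁, p₂), (s₂, p₃), (s₃, p₁)}` of size 3 -/
def M5opt : Fin 3 → Option (Fin 3) := fun s =>
  if s = 0 then some 1 else if s = 1 then some 2 else some 0

/-! In `M5` only `s₂` and `s₃` want to move, and only to `p₃`, which is full with `s₁`, the
favourite student of `l₂`. In `M5opt` only `s₃` wants to move, to `p₃` or `p₂`; each is full
with a student its lecturer ranks above `s₃`. Since `M5opt` assigns every student, no stable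
matching is larger. -/

section Stability

variable [Fintype S] {I : SPAST S P L} {M : S → Option P}

theorem not_blocks_of_projFull_of_dominated {s : S} {p : P} (hfull : ProjFull I M p)
    (hdom : ∀ s' ∈ projAssignees M p, I.lRank (I.lec p) s' ≤ I.lRank (I.lec p) s) :
    ¬ Blocks I M s p := by
  rintro ⟨-, ⟨hnf, -⟩ | ⟨hnf, -⟩ | ⟨-, s', hs', hlt⟩⟩
  · exact hnf hfull
  · exact hnf hfull
  · exact (hdom s' hs').not_gt hlt

theorem stable_of_forall_wantsToMove (hM : IsMatching I M)
    (h : ∀ s p, WantsToMove I M s p → ProjFull I M p ∧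
      ∀ s' ∈ projAssignees M p, I.lRank (I.lec p) s' ≤ I.lRank (I.lec p) s) :
    Stable I M := by
  refine ⟨hM, fun s p hb => ?_⟩
  obtain ⟨hfull, hdom⟩ := h s p hb.1
  exact not_blocks_of_projFull_of_dominated hfull hdom hb

end Stability

theorem msize_le_card {A B : Type} [Fintype A] (M : A → Option B) : msize M ≤ Fintype.card A :=
  card_filter_le _ _

theorem projAssignees_M5 : projAssignees M5 = ![∅, {2}, {0}] := by
  funext p
  fin_cases p <;> ext s <;> fin_cases s <;>
    simp only [projAssignees, mem_filter, mem_univ, true_and] <;> simp [M5]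

theorem lecAssignees_M5 : lecAssignees I5 M5 = ![{2}, {0}] := by
  funext k
  fin_cases k <;> ext s <;> fin_cases s <;> simp [lecAssignees, M5, I5]

theorem projAssignees_M5opt : projAssignees M5opt = ![{2}, {0}, {1}] := by
  funext p
  fin_cases p <;> ext s <;> fin_cases s <;>
    simp only [projAssignees, mem_filter, mem_univ, true_and] <;> simp [M5opt]

theorem lecAssignees_M5opt : lecAssignees I5 M5opt = ![{0, 2}, {1}] := by
  funext k
  fin_cases k <;> ext s <;> fin_cases s <;> simp [lecAssignees, M5opt, I5]

theorem isMatching_M5 : IsMatching I5 M5 := by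
  refine ⟨fun s p h => ?_, fun p => ?_, fun k => ?_⟩
  · fin_cases s <;> fin_cases p <;> simp_all [M5, I5]
  · fin_cases p <;> simp [projAssignees_M5, I5]
  · rw [lecAssignees_M5]; fin_cases k <;> simp [I5]

theorem isMatching_M5opt : IsMatching I5 M5opt := by
  refine ⟨fun s p h => ?_, fun p => ?_, fun k => ?_⟩
  · fin_cases s <;> fin_cases p <;> simp_all [M5opt, I5]
  · fin_cases p <;> simp [projAssignees_M5opt, I5]
  · rw [lecAssignees_M5opt]; fin_cases k <;> simp [I5]

theorem wantsToMove_M5 {s p : Fin 3} (h : WantsToMove I5 M5 s p) : s ≠ 0 ∧ p = 2 := by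
  fin_cases s <;> fin_cases p <;> simp_all [WantsToMove, M5, I5]

theorem wantsToMove_M5opt {s p : Fin 3} (h : WantsToMove I5 M5opt s p) :
    s = 2 ∧ (p = 1 ∨ p = 2) := by
  fin_cases s <;> fin_cases p <;> simp_all [WantsToMove, M5opt, I5]

theorem stable_M5 : Stable I5 M5 := by
  refine stable_of_forall_wantsToMove isMatching_M5 fun s p h => ?_
  obtain ⟨-, rfl⟩ := wantsToMove_M5 h
  simp [ProjFull, projAssignees_M5, I5]

theorem stable_M5opt : Stable I5 M5opt := by
  refine stable_of_forall_wantsToMove isMatching_M5opt fun s p h => ?_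
  obtain ⟨rfl, rfl | rfl⟩ := wantsToMove_M5opt h <;> simp [ProjFull, projAssignees_M5opt, I5]

theorem msize_M5 : msize M5 = 2 := by
  decide

theorem msize_M5opt : msize M5opt = 3 := by
  decide

/-- There is an SPA-ST instance with a stable matching of
exactly `2/3` the size of a maximum stable matching: in `I5`, `M5` is stable of
size `2`, `M5opt` is a maximum stable matching of size `3`, and
`3·|M5| = 2·|M5opt|`. -/
theorem stmt5 :
    Stable I5 M5 ∧ Stable I5 M5opt ∧ msize M5 = 2 ∧ msize M5opt = 3 ∧
    (∀ N, Stable I5 N → msize N ≤ msize M5opt) ∧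
    3 * msize M5 = 2 * msize M5opt := by
  refine ⟨stable_M5, stable_M5opt, msize_M5, msize_M5opt, fun N _ => ?_, ?_⟩
  · simpa [msize_M5opt] using msize_le_card N
  · rw [msize_M5, msize_M5opt]
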